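/- Let ψ : ℝⁿ ⇉ ℝⁿ satisfy the (Γ₁)-condition and V : ℝⁿ → ℝⁿ be L-Lipschitz continuous and η-strongly monotone. Let μ > 0 and ρ > 0 satisfy ‖P_{ψ(r)}(y) − P_{ψ(s)}(y)‖ ≤ ρ‖r − s‖ for all y, r, s ∈ ℝⁿ, assume θ := η − ρ − 1/2 − L²/2 − μ²/2 + μη > 0 and √(L² − 2ημ + μ²) + ρ < μ, and set θ₁ := θ/(2L + ρ + μ)². Suppose 0 < σ < 1 and 0 < τ < θ₁ · min{(1 − σ)/4, σ²/(4 − σ)}. Let x* be the unique solution of the inverse quasi-variational inequality problem, and let {x_n} satisfy x_{n+1} = x_n + (1 − σ)(x_n − x_{n−1}) + τ(P_{ψ(x_n)}(V(x_n) − μ x_n) − V(x_n)) for n ≥ 1. With v_n := ‖x_n − x*‖², c_n := ‖x_n − x_{n−1}‖², v^∇(n) := v_n − v_{n−1}, v^{Δ∇}(n) := (v_{n+1} − v_n) − (v_n − v_{n−1}), c^Δ(n) := c_{n+1} − c_n, C₀ := σ(θ₁σ/τ + 1) − 4 and C₁ := θ₁σ/τ + 1, the following inequality holds for all n ≥ 1: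 v^{Δ∇}(n) + σ v^∇(n) + θτ v_n + C₀ c_n + C₁ c^Δ(n) ≤ 0. -/

import Mathlib

/-!
Write `e = xₙ - x*`, `D = xₙ - xₙ₋₁` and `F = P_{ψ(xₙ)}(V xₙ - μ xₙ) - V xₙ`, so that
`xₙ₊₁ - xₙ = (1 - σ) D + τ F`. Since `x*` is a fixed point of `y ↦ P_{ψ(x*)}(y - μ x*)` at
`y = V x*`, nonexpansiveness of projections and the `ρ`-Lipschitz dependence of `P_{ψ(·)}` on
the set bound `‖P_{ψ(xₙ)}(V xₙ - μ xₙ) - V x*‖` by `‖(V xₙ - V x*) - μ e‖ + ρ ‖e‖`; with strong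
monotonicity and Lipschitz continuity of `V` this gives `⟪e, F⟫ ≤ -θ ‖e‖²` and
`θ₁ ‖F‖² ≤ θ ‖e‖²`. Expanding the squares, `⟪e, D⟫` cancels from the left-hand side, and after
multiplication by `σ` what is left is bounded by a quadratic form in `‖D‖` and `‖F‖` with
negative leading coefficient, whose discriminant is nonpositive as soon as `4τ ≤ θ₁ (1 - σ)`.
-/

open scoped RealInnerProductSpace
open MeasureTheory

/- Metric projection onto a set `C ⊆ ℝⁿ`: when `C` is nonempty, closed and convex this is
the unique nearest point of `C`. -/
open Classical in
noncomputable def metricProj {d : ℕ} (C : Set (EuclideanSpace ℝ (Fin d)))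
    (x : EuclideanSpace ℝ (Fin d)) : EuclideanSpace ℝ (Fin d) :=
  if h : ∃ y, y ∈ C ∧ ∀ z ∈ C, ‖x - y‖ ≤ ‖x - z‖ then h.choose else x

theorem quadratic_form_nonpos {a b c : ℝ} (ha : a < 0) (hd : discrim a b c ≤ 0) (s t : ℝ) :
    a * s ^ 2 + b * (s * t) + c * t ^ 2 ≤ 0 := by
  rw [discrim] at hd
  nlinarith [sq_nonneg (2 * a * s + b * t), mul_nonneg (sub_nonneg.2 hd) (sq_nonneg t)]

section InnerProductSpace

variable {E : Type*} [NormedAddCommGroup E] [InnerProductSpace ℝ E]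

theorem norm_sub_le_of_inner_nonpos {x y p q : E} (hp : ⟪x - p, q - p⟫ ≤ 0)
    (hq : ⟪y - q, p - q⟫ ≤ 0) : ‖p - q‖ ≤ ‖x - y‖ := by
  have hsq : ‖p - q‖ ^ 2 ≤ ‖x - y‖ * ‖p - q‖ :=
    calc ‖p - q‖ ^ 2 = ⟪x - y, p - q⟫ + ⟪x - p, q - p⟫ + ⟪y - q, p - q⟫ := by
          have hxy : x - y = (x - p) - (y - q) + (p - q) := by abel
          have hqp : q - p = -(p - q) := by abel
          rw [hxy, hqp, inner_add_left, inner_sub_left, inner_neg_right,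
            real_inner_self_eq_norm_sq]
          ring
      _ ≤ ⟪x - y, p - q⟫ := by linarith
      _ ≤ ‖x - y‖ * ‖p - q‖ := real_inner_le_norm _ _
  nlinarith [norm_nonneg (p - q), norm_nonneg (x - y)]

theorem norm_sub_smul_sq_le {u v : E} {L η μ : ℝ} (hL : ‖u‖ ≤ L * ‖v‖)
    (hη : η * ‖v‖ ^ 2 ≤ ⟪u, v⟫) (hμ : 0 ≤ μ) :
    ‖u - μ • v‖ ^ 2 ≤ (L ^ 2 - 2 * η * μ + μ ^ 2) * ‖v‖ ^ 2 := by
  have hu : ‖u‖ ^ 2 ≤ L ^ 2 * ‖v‖ ^ 2 := by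
    rw [← mul_pow]; exact pow_le_pow_left₀ (norm_nonneg u) hL 2
  rw [norm_sub_sq_real, real_inner_smul_right, norm_smul, mul_pow, Real.norm_eq_abs, sq_abs]
  nlinarith [mul_le_mul_of_nonneg_left hη hμ]

theorem inertial_step_lyapunov_le {x₀ x₁ x₂ xs F : E} {θ θ₁ σ τ C₀ C₁ : ℝ}
    (hσ0 : 0 < σ) (hσ1 : σ < 1) (hτ0 : 0 < τ) (hθ₁ : 0 < θ₁) (hτ : 4 * τ ≤ θ₁ * (1 - σ))
    (hC₀ : C₀ = σ * (θ₁ * σ / τ + 1) - 4) (hC₁ : C₁ = θ₁ * σ / τ + 1)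
    (hstep : x₂ = x₁ + (1 - σ) • (x₁ - x₀) + τ • F)
    (hF : ⟪x₁ - xs, F⟫ ≤ -θ * ‖x₁ - xs‖ ^ 2) (hFθ₁ : θ₁ * ‖F‖ ^ 2 ≤ θ * ‖x₁ - xs‖ ^ 2) :
    ((‖x₂ - xs‖ ^ 2 - ‖x₁ - xs‖ ^ 2) - (‖x₁ - xs‖ ^ 2 - ‖x₀ - xs‖ ^ 2))
        + σ * (‖x₁ - xs‖ ^ 2 - ‖x₀ - xs‖ ^ 2)
        + θ * τ * ‖x₁ - xs‖ ^ 2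
        + C₀ * ‖x₁ - x₀‖ ^ 2
        + C₁ * (‖x₂ - x₁‖ ^ 2 - ‖x₁ - x₀‖ ^ 2) ≤ 0 := by
  subst hC₀ hC₁
  set K := θ₁ * σ / τ
  have hKτ : K * τ = θ₁ * σ := div_mul_cancel₀ _ hτ0.ne'
  have hK0 : 0 < K := by positivity
  have hK : 4 * σ ≤ K * (1 - σ) := by
    have h : 4 * σ * τ ≤ K * (1 - σ) * τ := by nlinarith
    exact le_of_mul_le_mul_right h hτ0
  have hx₂x₁ : x₂ - x₁ = (1 - σ) • (x₁ - x₀) + τ • F := by rw [hstep]; abel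
  have e₀ : ‖x₀ - xs‖ ^ 2 = ‖x₁ - xs‖ ^ 2 - 2 * ⟪x₁ - xs, x₁ - x₀⟫ + ‖x₁ - x₀‖ ^ 2 := by
    rw [← norm_sub_sq_real, sub_sub_sub_cancel_left]
  have e₂ : ‖x₂ - xs‖ ^ 2 = ‖x₁ - xs‖ ^ 2
      + 2 * ((1 - σ) * ⟪x₁ - xs, x₁ - x₀⟫ + τ * ⟪x₁ - xs, F⟫) + ‖x₂ - x₁‖ ^ 2 := by
    rw [← sub_add_sub_cancel x₂ x₁ xs, add_comm, norm_add_sq_real, hx₂x₁, inner_add_right,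
      real_inner_smul_right, real_inner_smul_right]
  have e₂₁ : ‖x₂ - x₁‖ ^ 2 = (1 - σ) ^ 2 * ‖x₁ - x₀‖ ^ 2
      + 2 * ((1 - σ) * τ) * ⟪x₁ - x₀, F⟫ + τ ^ 2 * ‖F‖ ^ 2 := by
    rw [hx₂x₁, norm_add_sq_real, real_inner_smul_left, real_inner_smul_right, norm_smul,
      norm_smul, mul_pow, mul_pow, Real.norm_eq_abs, Real.norm_eq_abs, sq_abs, sq_abs]
    ring
  -- Times `σ`, the left-hand side is at most a quadratic form in `‖x₁ - x₀‖` and `‖F‖` whose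
  -- discriminant is `-8 τ² σ (K (1 - σ) - 4 σ)`.
  have hquad := quadratic_form_nonpos (a := σ * ((K + 2) * (1 - σ) ^ 2 - (1 - σ) * K - 4))
    (b := 2 * σ * (K + 2) * (1 - σ) * τ) (c := σ * (K + 2) * τ ^ 2 - K * τ ^ 2)
    (by nlinarith [mul_pos (mul_pos hσ0 hK0) (mul_pos hσ0 (sub_pos.2 hσ1))])
    (by rw [discrim]; nlinarith [mul_pos (pow_pos hτ0 2) hσ0]) ‖x₁ - x₀‖ ‖F‖
  have hCS := real_inner_le_norm (x₁ - x₀) F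
  suffices σ * (((‖x₂ - xs‖ ^ 2 - ‖x₁ - xs‖ ^ 2) - (‖x₁ - xs‖ ^ 2 - ‖x₀ - xs‖ ^ 2))
        + σ * (‖x₁ - xs‖ ^ 2 - ‖x₀ - xs‖ ^ 2) + θ * τ * ‖x₁ - xs‖ ^ 2
        + (σ * (K + 1) - 4) * ‖x₁ - x₀‖ ^ 2
        + (K + 1) * (‖x₂ - x₁‖ ^ 2 - ‖x₁ - x₀‖ ^ 2)) ≤ 0 from
    nonpos_of_mul_nonpos_right this hσ0
  rw [e₂, e₀, e₂₁]
  linear_combination (2 * σ * τ) * hF + (σ * τ) * hFθ₁ + (2 * σ * (K + 2) * (1 - σ) * τ) * hCS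
    + hquad + (τ * ‖F‖ ^ 2) * hKτ

end InnerProductSpace

section MetricProj

variable {d : ℕ} {C : Set (EuclideanSpace ℝ (Fin d))}

theorem metricProj_spec (hne : C.Nonempty) (hcl : IsClosed C) (hcv : Convex ℝ C)
    (x : EuclideanSpace ℝ (Fin d)) :
    metricProj C x ∈ C ∧ ∀ z ∈ C, ⟪x - metricProj C x, z - metricProj C x⟫ ≤ 0 := by
  have hbdd : BddBelow (Set.range fun w : C => ‖x - w‖) :=
    ⟨0, by rintro _ ⟨w, rfl⟩; exact norm_nonneg _⟩
  have hex : ∃ y, y ∈ C ∧ ∀ z ∈ C, ‖x - y‖ ≤ ‖x - z‖ := by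
    obtain ⟨v, hv, hmin⟩ := exists_norm_eq_iInf_of_complete_convex hne hcl.isComplete hcv x
    exact ⟨v, hv, fun z hz => hmin ▸ ciInf_le hbdd ⟨z, hz⟩⟩
  obtain ⟨hmem, hmin⟩ := hex.choose_spec
  rw [metricProj, dif_pos hex]
  have : Nonempty C := hne.to_subtype
  refine ⟨hmem, (norm_eq_iInf_iff_real_inner_le_zero hcv hmem).mp ?_⟩
  exact le_antisymm (le_ciInf fun w => hmin w w.2) (ciInf_le hbdd ⟨_, hmem⟩)

theorem metricProj_eq_of_inner_nonpos (hne : C.Nonempty) (hcl : IsClosed C) (hcv : Convex ℝ C)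
    {x q : EuclideanSpace ℝ (Fin d)} (hq : q ∈ C) (hxq : ∀ z ∈ C, ⟪x - q, z - q⟫ ≤ 0) :
    metricProj C x = q := by
  obtain ⟨hmem, hinner⟩ := metricProj_spec hne hcl hcv x
  have h := norm_sub_le_of_inner_nonpos (hinner q hq) (hxq _ hmem)
  rwa [sub_self, norm_zero, norm_le_zero_iff, sub_eq_zero] at h

theorem norm_metricProj_sub_le (hne : C.Nonempty) (hcl : IsClosed C) (hcv : Convex ℝ C)
    (x y : EuclideanSpace ℝ (Fin d)) : ‖metricProj C x - metricProj C y‖ ≤ ‖x - y‖ := by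
  obtain ⟨hx, hx'⟩ := metricProj_spec hne hcl hcv x
  obtain ⟨hy, hy'⟩ := metricProj_spec hne hcl hcv y
  exact norm_sub_le_of_inner_nonpos (hx' _ hy) (hy' _ hx)

end MetricProj

section InverseQVI

variable {d : ℕ} {ψ : EuclideanSpace ℝ (Fin d) → Set (EuclideanSpace ℝ (Fin d))}
  {V : EuclideanSpace ℝ (Fin d) → EuclideanSpace ℝ (Fin d)} {μ : ℝ}
  {x xs : EuclideanSpace ℝ (Fin d)}

noncomputable def iqviResidual (ψ : EuclideanSpace ℝ (Fin d) → Set (EuclideanSpace ℝ (Fin d)))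
    (V : EuclideanSpace ℝ (Fin d) → EuclideanSpace ℝ (Fin d)) (μ : ℝ)
    (x : EuclideanSpace ℝ (Fin d)) : EuclideanSpace ℝ (Fin d) :=
  metricProj (ψ x) (V x - μ • x) - V x

theorem metricProj_eq_of_isSolution (hψ : (ψ xs).Nonempty ∧ IsClosed (ψ xs) ∧ Convex ℝ (ψ xs))
    (hμ : 0 ≤ μ) (hxs : V xs ∈ ψ xs ∧ ∀ z ∈ ψ xs, 0 ≤ ⟪xs, z - V xs⟫) :
    metricProj (ψ xs) (V xs - μ • xs) = V xs := by
  refine metricProj_eq_of_inner_nonpos hψ.1 hψ.2.1 hψ.2.2 hxs.1 fun z hz => ?_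
  rw [sub_sub_cancel_left, inner_neg_left, real_inner_smul_left, neg_nonpos]
  exact mul_nonneg hμ (hxs.2 z hz)

theorem norm_metricProj_sub_solution_le {ρ : ℝ}
    (hψ : (ψ x).Nonempty ∧ IsClosed (ψ x) ∧ Convex ℝ (ψ x))
    (hproj : ‖metricProj (ψ x) (V xs - μ • xs) - metricProj (ψ xs) (V xs - μ • xs)‖ ≤
      ρ * ‖x - xs‖)
    (hfix : metricProj (ψ xs) (V xs - μ • xs) = V xs) :
    ‖metricProj (ψ x) (V x - μ • x) - V xs‖ ≤ ‖(V x - V xs) - μ • (x - xs)‖ + ρ * ‖x - xs‖ := by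
  set p' := metricProj (ψ x) (V xs - μ • xs)
  rw [hfix] at hproj
  calc ‖metricProj (ψ x) (V x - μ • x) - V xs‖
      ≤ ‖metricProj (ψ x) (V x - μ • x) - p'‖ + ‖p' - V xs‖ :=
        norm_sub_le_norm_sub_add_norm_sub _ _ _
    _ ≤ ‖(V x - μ • x) - (V xs - μ • xs)‖ + ρ * ‖x - xs‖ :=
        add_le_add (norm_metricProj_sub_le hψ.1 hψ.2.1 hψ.2.2 _ _) hproj
    _ = ‖(V x - V xs) - μ • (x - xs)‖ + ρ * ‖x - xs‖ := by rw [smul_sub, sub_sub_sub_comm]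

theorem inner_iqviResidual_le {L η ρ : ℝ}
    (hψ : (ψ x).Nonempty ∧ IsClosed (ψ x) ∧ Convex ℝ (ψ x))
    (hproj : ‖metricProj (ψ x) (V xs - μ • xs) - metricProj (ψ xs) (V xs - μ • xs)‖ ≤
      ρ * ‖x - xs‖)
    (hfix : metricProj (ψ xs) (V xs - μ • xs) = V xs)
    (hL : ‖V x - V xs‖ ≤ L * ‖x - xs‖) (hη : η * ‖x - xs‖ ^ 2 ≤ ⟪V x - V xs, x - xs⟫)
    (hμ : 0 ≤ μ) :
    ⟪x - xs, iqviResidual ψ V μ x⟫ ≤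
      -(η - ρ - 1/2 - L^2/2 - μ^2/2 + μ*η) * ‖x - xs‖ ^ 2 := by
  have hp := norm_metricProj_sub_solution_le hψ hproj hfix
  have hw := norm_sub_smul_sq_le hL hη hμ
  have hsplit : ⟪x - xs, iqviResidual ψ V μ x⟫ =
      ⟪x - xs, metricProj (ψ x) (V x - μ • x) - V xs⟫ - ⟪V x - V xs, x - xs⟫ := by
    rw [iqviResidual, ← real_inner_comm (V x - V xs) (x - xs), ← inner_sub_right,
      sub_sub_sub_cancel_right]
  have hinner := real_inner_le_norm (x - xs) (metricProj (ψ x) (V x - μ • x) - V xs)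
  -- AM-GM on `‖V x - V xs - μ • (x - xs)‖ * ‖x - xs‖` produces the `1/2` terms of `θ`
  nlinarith [mul_le_mul_of_nonneg_left hp (norm_nonneg (x - xs)),
    sq_nonneg (‖(V x - V xs) - μ • (x - xs)‖ - ‖x - xs‖)]

theorem norm_iqviResidual_le {L ρ : ℝ}
    (hψ : (ψ x).Nonempty ∧ IsClosed (ψ x) ∧ Convex ℝ (ψ x))
    (hproj : ‖metricProj (ψ x) (V xs - μ • xs) - metricProj (ψ xs) (V xs - μ • xs)‖ ≤
      ρ * ‖x - xs‖)
    (hfix : metricProj (ψ xs) (V xs - μ • xs) = V xs)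
    (hL : ‖V x - V xs‖ ≤ L * ‖x - xs‖) (hμ : 0 ≤ μ) :
    ‖iqviResidual ψ V μ x‖ ≤ (2 * L + ρ + μ) * ‖x - xs‖ := by
  have hp := norm_metricProj_sub_solution_le hψ hproj hfix
  have hw : ‖(V x - V xs) - μ • (x - xs)‖ ≤ L * ‖x - xs‖ + μ * ‖x - xs‖ := by
    refine (norm_sub_le _ _).trans ?_
    rw [norm_smul, Real.norm_of_nonneg hμ]
    linarith
  calc ‖iqviResidual ψ V μ x‖
      = ‖(metricProj (ψ x) (V x - μ • x) - V xs) - (V x - V xs)‖ := by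
        rw [iqviResidual, sub_sub_sub_cancel_right]
    _ ≤ ‖metricProj (ψ x) (V x - μ • x) - V xs‖ + ‖V x - V xs‖ := norm_sub_le _ _
    _ ≤ (2 * L + ρ + μ) * ‖x - xs‖ := by linarith

end InverseQVI

theorem stmt_17_general {d : ℕ} (ψ : EuclideanSpace ℝ (Fin d) → Set (EuclideanSpace ℝ (Fin d)))
    (V : EuclideanSpace ℝ (Fin d) → EuclideanSpace ℝ (Fin d)) (L η μ ρ θ θ₁ σ τ C₀ C₁ : ℝ)
    (hΓ₁ : ∀ x, (ψ x).Nonempty ∧ IsClosed (ψ x) ∧ Convex ℝ (ψ x))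
    (hL : ∀ y z, ‖V y - V z‖ ≤ L * ‖y - z‖)
    (hη : ∀ y z, η * ‖y - z‖ ^ 2 ≤ ⟪V y - V z, y - z⟫)
    (hμ : 0 < μ)
    (hproj : ∀ y r s, ‖metricProj (ψ r) y - metricProj (ψ s) y‖ ≤ ρ * ‖r - s‖)
    (hθ : θ = η - ρ - 1/2 - L^2/2 - μ^2/2 + μ*η)
    (hθ₁ : θ₁ = θ / (2*L + ρ + μ)^2)
    (hσ0 : 0 < σ) (hσ1 : σ < 1)
    (hτ0 : 0 < τ) (hτ : τ < θ₁ * min ((1 - σ)/4) (σ^2/(4 - σ)))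
    (hC₀ : C₀ = σ * (θ₁ * σ / τ + 1) - 4) (hC₁ : C₁ = θ₁ * σ / τ + 1)
    (xs : EuclideanSpace ℝ (Fin d))
    (hxs : V xs ∈ ψ xs ∧ ∀ z ∈ ψ xs, 0 ≤ ⟪xs, z - V xs⟫)
    (x : ℕ → EuclideanSpace ℝ (Fin d))
    (hiter : ∀ n : ℕ, 1 ≤ n →
      x (n+1) = x n + (1 - σ) • (x n - x (n-1)) +
        τ • (metricProj (ψ (x n)) (V (x n) - μ • x n) - V (x n))) :
    ∀ n : ℕ, 1 ≤ n →
      ((‖x (n+1) - xs‖ ^ 2 - ‖x n - xs‖ ^ 2) - (‖x n - xs‖ ^ 2 - ‖x (n-1) - xs‖ ^ 2))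
          + σ * (‖x n - xs‖ ^ 2 - ‖x (n-1) - xs‖ ^ 2)
          + θ * τ * ‖x n - xs‖ ^ 2
          + C₀ * ‖x n - x (n-1)‖ ^ 2
          + C₁ * (‖x (n+1) - x n‖ ^ 2 - ‖x n - x (n-1)‖ ^ 2) ≤ 0 := by
  intro n hn
  have hmin : 0 < min ((1 - σ)/4) (σ^2/(4 - σ)) :=
    lt_min (by linarith) (div_pos (by positivity) (by linarith))
  have hθ₁pos : 0 < θ₁ := pos_of_mul_pos_left (hτ0.trans hτ) hmin.le
  have hτ4 : 4 * τ ≤ θ₁ * (1 - σ) := by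
    nlinarith [mul_le_mul_of_nonneg_left (min_le_left ((1 - σ)/4) (σ^2/(4 - σ))) hθ₁pos.le]
  have hθθ₁ : θ = θ₁ * (2*L + ρ + μ)^2 := by
    have hS : (2*L + ρ + μ)^2 ≠ 0 := fun h => hθ₁pos.ne' (by rw [hθ₁, h, div_zero])
    rw [hθ₁, div_mul_cancel₀ _ hS]
  have hfix := metricProj_eq_of_isSolution (hΓ₁ xs) hμ.le hxs
  have hres := norm_iqviResidual_le (hΓ₁ (x n)) (hproj _ _ _) hfix (hL _ _) hμ.le
  refine inertial_step_lyapunov_le hσ0 hσ1 hτ0 hθ₁pos hτ4 hC₀ hC₁ (hiter n hn) ?_ ?_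
  · rw [hθ]
    exact inner_iqviResidual_le (hΓ₁ (x n)) (hproj _ _ _) hfix (hL _ _) (hη _ _) hμ.le
  · rw [hθθ₁, mul_assoc, ← mul_pow]
    exact mul_le_mul_of_nonneg_left (pow_le_pow_left₀ (norm_nonneg _) hres 2) hθ₁pos.le

/-- Under the assumptions of the linear-convergence theorem, the iterates of
the inertial projection algorithm satisfy, for every `n ≥ 1`,
`v^{Δ∇}(n) + σ v^∇(n) + θτ v_n + C₀ c_n + C₁ c^Δ(n) ≤ 0`,
where `v_n = ‖x_n − x*‖²`, `c_n = ‖x_n − x_{n−1}‖²`, `C₀ = σ(θ₁σ/τ + 1) − 4` and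
`C₁ = θ₁σ/τ + 1`. -/
theorem stmt_17 {d : ℕ} (ψ : EuclideanSpace ℝ (Fin d) → Set (EuclideanSpace ℝ (Fin d)))
    (V : EuclideanSpace ℝ (Fin d) → EuclideanSpace ℝ (Fin d)) (L η μ ρ θ θ₁ σ τ C₀ C₁ : ℝ)
    (hΓ₁ : ∀ x, (ψ x).Nonempty ∧ IsClosed (ψ x) ∧ Convex ℝ (ψ x))
    (hL : ∀ y z, ‖V y - V z‖ ≤ L * ‖y - z‖)
    (hη : ∀ y z, η * ‖y - z‖ ^ 2 ≤ ⟪V y - V z, y - z⟫)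
    (hμ : 0 < μ) (hρ : 0 < ρ)
    (hproj : ∀ y r s, ‖metricProj (ψ r) y - metricProj (ψ s) y‖ ≤ ρ * ‖r - s‖)
    (hθ : θ = η - ρ - 1/2 - L^2/2 - μ^2/2 + μ*η) (hθpos : 0 < θ)
    (hcond : Real.sqrt (L^2 - 2*η*μ + μ^2) + ρ < μ)
    (hθ₁ : θ₁ = θ / (2*L + ρ + μ)^2)
    (hσ0 : 0 < σ) (hσ1 : σ < 1)
    (hτ0 : 0 < τ) (hτ : τ < θ₁ * min ((1 - σ)/4) (σ^2/(4 - σ)))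
    (hC₀ : C₀ = σ * (θ₁ * σ / τ + 1) - 4) (hC₁ : C₁ = θ₁ * σ / τ + 1)
    (xs : EuclideanSpace ℝ (Fin d))
    (hxs : V xs ∈ ψ xs ∧ ∀ z ∈ ψ xs, 0 ≤ ⟪xs, z - V xs⟫)
    (x : ℕ → EuclideanSpace ℝ (Fin d))
    (hiter : ∀ n : ℕ, 1 ≤ n →
      x (n+1) = x n + (1 - σ) • (x n - x (n-1)) +
        τ • (metricProj (ψ (x n)) (V (x n) - μ • x n) - V (x n))) :
    ∀ n : ℕ, 1 ≤ n →
      ((‖x (n+1) - xs‖ ^ 2 - ‖x n - xs‖ ^ 2) - (‖x n - xs‖ ^ 2 - ‖x (n-1) - xs‖ ^ 2))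
          + σ * (‖x n - xs‖ ^ 2 - ‖x (n-1) - xs‖ ^ 2)
          + θ * τ * ‖x n - xs‖ ^ 2
          + C₀ * ‖x n - x (n-1)‖ ^ 2
          + C₁ * (‖x (n+1) - x n‖ ^ 2 - ‖x n - x (n-1)‖ ^ 2) ≤ 0 :=
  stmt_17_general ψ V L η μ ρ θ θ₁ σ τ C₀ C₁ hΓ₁ hL hη hμ hproj hθ hθ₁ hσ0 hσ1 hτ0 hτ hC₀ hC₁ xs hxs
    x hiter
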